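/- The following identity holds for the 3-hyperbolic functions, for all x, l, t ∈ ℂ: s_1(x)s_1(l−t)s_2(l) − s_1(x)s_2(l−t)s_1(l) + s_2(x)s_2(l−t)s_0(l) − s_2(x)s_1(l−t)s_1(l) = s_2(−t)s_2(x−l) − s_2(x−t)s_2(−l). -/

import Mathlib

/-! Expand `s₂(x - l)`, `s_k(l - t)` and `s₂(x - t)` by the addition formula
`s_k(a + b) = ∑_{i + j ≡ k (mod 3)} s_i(a) s_j(b)`, and write each `s_k(-l)` as a `2 × 2` cofactor
of the circulant matrix of `(s₀, s₁, s₂)(l)`, whose determinant is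
`exp(l) exp(lζ) exp(lζ²) = exp(l (1 + ζ + ζ²)) = 1`. The identity then becomes a polynomial
identity in the values `s_i(x)`, `s_i(l)`, `s_i(-t)`. -/

open Complex Finset

noncomputable def zeta3 : ℂ := Complex.exp (2 * Real.pi * Complex.I / 3)

noncomputable def s3 (k : ℕ) (z : ℂ) : ℂ :=
  (1 / 3) * ∑ m ∈ Finset.range 3, ((zeta3 ^ m)⁻¹) ^ k * Complex.exp (z * zeta3 ^ m)

theorem zeta3_isPrimitiveRoot : IsPrimitiveRoot zeta3 3 := by
  simpa [zeta3] using Complex.isPrimitiveRoot_exp 3 (by norm_num)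

theorem zeta3_sq_add_zeta3_add_one : zeta3 ^ 2 + zeta3 + 1 = 0 := by
  simpa [sum_range_succ, add_comm, add_left_comm, add_assoc] using
    zeta3_isPrimitiveRoot.geom_sum_eq_zero (by norm_num)

theorem zeta3_inv : zeta3⁻¹ = zeta3 ^ 2 := by
  rw [inv_eq_of_mul_eq_one_right]
  rw [← pow_succ', zeta3_isPrimitiveRoot.pow_eq_one]

theorem exp_neg_eq_exp_mul_zeta3_mul_exp_mul_zeta3_sq (z : ℂ) :
    exp (-z) = exp (z * zeta3) * exp (z * zeta3 ^ 2) := by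
  rw [← exp_add]
  congr 1
  linear_combination -z * zeta3_sq_add_zeta3_add_one

theorem s3_eq (k : ℕ) (z : ℂ) :
    s3 k z = (exp z + zeta3 ^ (2 * k) * exp (z * zeta3) + zeta3 ^ k * exp (z * zeta3 ^ 2)) / 3 := by
  have zeta3_sq_inv : (zeta3 ^ 2)⁻¹ = zeta3 := by rw [← zeta3_inv, inv_inv]
  simp only [s3, sum_range_succ, sum_range_zero, zero_add, pow_zero, pow_one, inv_one, one_pow,
    mul_one, one_mul, zeta3_inv, zeta3_sq_inv, pow_mul]
  ring

theorem s3_add_three (k : ℕ) : s3 (k + 3) = s3 k := by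
  ext z
  simp only [s3_eq, Nat.mul_add, pow_add, pow_mul', zeta3_isPrimitiveRoot.pow_eq_one, one_pow,
    mul_one]

theorem s3_add (k : ℕ) (a b : ℂ) :
    s3 k (a + b) = s3 0 a * s3 k b + s3 1 a * s3 (k + 2) b + s3 2 a * s3 (k + 4) b := by
  have := zeta3_sq_add_zeta3_add_one
  simp only [s3_eq, add_mul, exp_add, pow_add, pow_mul, mul_add]
  grind

theorem s3_neg (k : ℕ) (z : ℂ) :
    s3 k (-z) = s3 (2 * k) z ^ 2 - s3 (2 * k + 1) z * s3 (2 * k + 2) z := by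
  have := zeta3_sq_add_zeta3_add_one
  have e₀ := exp_neg_eq_exp_mul_zeta3_mul_exp_mul_zeta3_sq z
  have e₁ := exp_neg_eq_exp_mul_zeta3_mul_exp_mul_zeta3_sq (z * zeta3)
  have e₂ := exp_neg_eq_exp_mul_zeta3_mul_exp_mul_zeta3_sq (z * zeta3 ^ 2)
  have hw : (zeta3 ^ k) ^ 3 = 1 := by
    rw [← pow_mul, mul_comm, pow_mul, zeta3_isPrimitiveRoot.pow_eq_one, one_pow]
  simp only [s3_eq, neg_mul, Nat.mul_add, pow_add, pow_mul'] at *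
  generalize zeta3 ^ k = w at *
  grind

theorem s3_resolvent_identity (x l t : ℂ) :
    s3 1 x * s3 1 (l - t) * s3 2 l - s3 1 x * s3 2 (l - t) * s3 1 l +
    s3 2 x * s3 2 (l - t) * s3 0 l - s3 2 x * s3 1 (l - t) * s3 1 l =
    s3 2 (-t) * s3 2 (x - l) - s3 2 (x - t) * s3 2 (-l) := by
  simp only [sub_eq_add_neg, s3_add, s3_neg (z := l), Nat.reduceAdd, Nat.reduceMul, s3_add_three]
  ring
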